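/- For all n, k ≥ 0, the degenerate Stirling number of the second kind admits the explicit formula: (1/k!) ∑_{l=0}^{k} C(k,l) (−1)^{k−l} (l)_{n,λ} equals S_{2,λ}(n,k) if n ≥ k, and equals 0 if n < k. -/

import Mathlib

/-!
The exponential generating series `∑ (x)_{n,λ} tⁿ/n!` of the λ-falling factorials is
`e_λ(t)^x`: the Vandermonde identity `(x + y)_{n,λ} = ∑ C(n,i) (x)_{i,λ} (y)_{n-i,λ}` makes
these series multiplicative in `x`, so `e_λ(t)^l = ∑ (l)_{n,λ} tⁿ/n!`. Expanding
`(e_λ(t) - 1)^k` binomially gives `n! [tⁿ] (e_λ(t) - 1)^k = ∑ C(k,l) (-1)^(k-l) (l)_{n,λ}`,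
and for `n < k` this coefficient vanishes because `e_λ(t) - 1` has no constant term.
-/

open Real Filter Finset

/-- λ-falling factorial (x)_{n,λ} = x(x-λ)⋯(x-(n-1)λ). -/
noncomputable def dfall (lam x : ℝ) (n : ℕ) : ℝ := ∏ j ∈ Finset.range n, (x - j * lam)

/-- degenerate exponential e_λ(t) = (1+λt)^{1/λ}. -/
noncomputable def dexp (lam t : ℝ) : ℝ := (1 + lam * t) ^ (1 / lam)

/-- Degenerate Stirling numbers of the second kind, via coefficients of (1/k!)(e_λ(t)-1)^k. -/
noncomputable def degStirling (lam : ℝ) (n k : ℕ) : ℝ :=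
  (Nat.factorial n : ℝ) / (Nat.factorial k : ℝ) *
    PowerSeries.coeff n ((PowerSeries.mk (fun m => dfall lam 1 m / (Nat.factorial m : ℝ)) - 1) ^ k)

lemma dfall_succ (lam x : ℝ) (n : ℕ) :
    dfall lam x (n + 1) = dfall lam x n * (x - n * lam) :=
  prod_range_succ _ n

lemma dfall_zero_succ (lam : ℝ) (n : ℕ) : dfall lam 0 (n + 1) = 0 :=
  prod_eq_zero (mem_range.mpr n.succ_pos) (by simp)

lemma dfall_add (lam x y : ℝ) (n : ℕ) :
    dfall lam (x + y) n = ∑ ij ∈ antidiagonal n,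
      (n.choose ij.1 : ℝ) * (dfall lam x ij.1 * dfall lam y ij.2) := by
  induction n with
  | zero => simp [dfall]
  | succ n ih =>
    rw [sum_antidiagonal_choose_succ_mul (fun i j => dfall lam x i * dfall lam y j),
      ← sum_add_distrib, dfall_succ, ih, sum_mul]
    refine sum_congr rfl fun ij hij => ?_
    rw [HasAntidiagonal.mem_antidiagonal] at hij
    have hchoose : n.choose ij.2 = n.choose ij.1 := Nat.choose_symm_of_eq_add (by omega)
    have hn : (n : ℝ) = ij.1 + ij.2 := by exact_mod_cast hij.symm
    rw [hchoose, dfall_succ, dfall_succ, hn]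
    ring

noncomputable def dexpSeries (lam x : ℝ) : PowerSeries ℝ :=
  PowerSeries.mk fun m => dfall lam x m / (m.factorial : ℝ)

lemma coeff_dexpSeries (lam x : ℝ) (n : ℕ) :
    PowerSeries.coeff n (dexpSeries lam x) = dfall lam x n / n.factorial :=
  PowerSeries.coeff_mk _ _

lemma dexpSeries_add (lam x y : ℝ) :
    dexpSeries lam (x + y) = dexpSeries lam x * dexpSeries lam y := by
  ext n
  simp only [PowerSeries.coeff_mul, coeff_dexpSeries, dfall_add, sum_div]
  refine sum_congr rfl fun ij hij => ?_
  rw [HasAntidiagonal.mem_antidiagonal] at hij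
  subst hij
  rw [Nat.cast_add_choose]
  field_simp

lemma dexpSeries_zero (lam : ℝ) : dexpSeries lam 0 = 1 := by
  ext n
  cases n with
  | zero => simp [dexpSeries, dfall]
  | succ n => simp [dexpSeries, dfall_zero_succ]

lemma dexpSeries_one_pow (lam : ℝ) (l : ℕ) : dexpSeries lam 1 ^ l = dexpSeries lam l := by
  induction l with
  | zero => simp [dexpSeries_zero]
  | succ l ih => rw [pow_succ, ih, ← dexpSeries_add, Nat.cast_succ]

lemma dexpSeries_one_sub_one_pow (lam : ℝ) (k : ℕ) :
    (dexpSeries lam 1 - 1) ^ k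
      = ∑ l ∈ range (k + 1), ((k.choose l : ℝ) * (-1) ^ (k - l)) • dexpSeries lam l := by
  rw [sub_eq_add_neg, add_pow]
  refine sum_congr rfl fun l _ => ?_
  rw [dexpSeries_one_pow, PowerSeries.smul_eq_C_mul, map_mul, map_pow, map_neg, map_one,
    map_natCast]
  ring

lemma sum_choose_mul_dfall_eq_factorial_mul_coeff (lam : ℝ) (n k : ℕ) :
    ∑ l ∈ range (k + 1), (k.choose l : ℝ) * (-1) ^ (k - l) * dfall lam l n
      = n.factorial * PowerSeries.coeff n ((dexpSeries lam 1 - 1) ^ k) := by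
  simp only [dexpSeries_one_sub_one_pow, map_sum, map_smul, coeff_dexpSeries, smul_eq_mul,
    mul_sum]
  refine sum_congr rfl fun l _ => ?_
  field_simp

lemma coeff_dexpSeries_sub_one_pow_of_lt (lam : ℝ) {n k : ℕ} (h : n < k) :
    PowerSeries.coeff n ((dexpSeries lam 1 - 1) ^ k) = 0 := by
  have hconst : PowerSeries.constantCoeff (dexpSeries lam 1 - 1) = 0 := by
    simp [dexpSeries, dfall]
  exact PowerSeries.X_pow_dvd_iff.mp (pow_dvd_pow_of_dvd (PowerSeries.X_dvd_iff.mpr hconst) k) n h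

lemma degStirling_eq (lam : ℝ) (n k : ℕ) :
    degStirling lam n k
      = n.factorial / k.factorial * PowerSeries.coeff n ((dexpSeries lam 1 - 1) ^ k) :=
  rfl

theorem stmt10 (lam : ℝ) (n k : ℕ) :
    (1 / (Nat.factorial k : ℝ)) *
        ∑ l ∈ Finset.range (k + 1), (Nat.choose k l : ℝ) * (-1) ^ (k - l) * dfall lam l n
      = if k ≤ n then degStirling lam n k else 0 := by
  rw [sum_choose_mul_dfall_eq_factorial_mul_coeff]
  split_ifs with hkn
  · rw [degStirling_eq]
    ring
  · rw [coeff_dexpSeries_sub_one_pow_of_lt lam (not_le.mp hkn)]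
    simp
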